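/- Assume moreover that ‖g₁(x,y)‖ ≤ C for all (x,y), for some constant C > 0, and that ρ(ε) < 1. Let (x̃^ε, ỹ^ε) ∈ C_{−γ}^−(E₁ × E₂) be the unique solution of the time-rescaled slow–fast integral system with initial slow value x₀, and let y⁰ ∈ C_{−γ}^−(E₂) be the unique solution of the critical integral equation y⁰(t) = ∫_{−∞}^t exp((t−s)F) g₂(x₀, y⁰(s) + σξ(s)) ds. Set C₁ := (‖Sx₀‖ + C)/γ_s and q(t, ε) := e^{(γ+εγ_s)t}/(γ_f − εγ_s) − e^{γt}/γ_f for t ≤ 0. Then sup_{t≤0} e^{γt}‖ỹ^ε(t) − y⁰(t)‖ ≤ (K·C₁/(1 + K/(γ + γ_f))) · sup_{t≤0} q(t, ε). -/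

import Mathlib

open MeasureTheory Real Filter

noncomputable section

/-- Weighted sup-norm `sup_{t ≤ 0} e^{-β t} ‖φ t‖` on `(-∞,0]`. -/
def negNorm {E : Type*} [NormedAddCommGroup E] (β : ℝ) (φ : ℝ → E) : ℝ :=
  ⨆ t : Set.Iic (0 : ℝ), Real.exp (-β * t.1) * ‖φ t.1‖

/-- Membership in the Banach space `C_β^-(E)` of continuous functions on `(-∞,0]`
with finite weighted sup-norm. -/
def MemCneg {E : Type*} [NormedAddCommGroup E] (β : ℝ) (φ : ℝ → E) : Prop :=
  ContinuousOn φ (Set.Iic 0) ∧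
    BddAbove (Set.range fun t : Set.Iic (0 : ℝ) => Real.exp (-β * t.1) * ‖φ t.1‖)

/-- Weighted sup-norm `sup_{t ≥ 0} e^{-β t} ‖φ t‖` on `[0,∞)`. -/
def posNorm {E : Type*} [NormedAddCommGroup E] (β : ℝ) (φ : ℝ → E) : ℝ :=
  ⨆ t : Set.Ici (0 : ℝ), Real.exp (-β * t.1) * ‖φ t.1‖

/-- Membership in the Banach space `C_β^+(E)` of continuous functions on `[0,∞)`
with finite weighted sup-norm. -/
def MemCpos {E : Type*} [NormedAddCommGroup E] (β : ℝ) (φ : ℝ → E) : Prop :=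
  ContinuousOn φ (Set.Ici 0) ∧
    BddAbove (Set.range fun t : Set.Ici (0 : ℝ) => Real.exp (-β * t.1) * ‖φ t.1‖)

variable {E₁ E₂ : Type*}
  [NormedAddCommGroup E₁] [NormedSpace ℝ E₁]
  [NormedAddCommGroup E₂] [NormedSpace ℝ E₂]

/-- Slow component of the Lyapunov–Perron operator `I^ε_{x₀}`. -/
def LPslow (S : E₁ →L[ℝ] E₁) (g1 : ℝ → E₁ → E₂ → E₁) (x0 : E₁)
    (x : ℝ → E₁) (y : ℝ → E₂) (t : ℝ) : E₁ :=
  NormedSpace.exp (t • S) x0 +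
    ∫ s in (0:ℝ)..t, NormedSpace.exp ((t - s) • S) (g1 s (x s) (y s))

/-- Fast component of the Lyapunov–Perron operator `I^ε_{x₀}`. -/
def LPfast (F : E₂ →L[ℝ] E₂) (g2 : ℝ → E₁ → E₂ → E₂) (ε : ℝ)
    (x : ℝ → E₁) (y : ℝ → E₂) (t : ℝ) : E₂ :=
  (1/ε) • ∫ s in Set.Iic t, NormedSpace.exp (((t - s)/ε) • F) (g2 s (x s) (y s))

/-- Slow component of the time-rescaled slow–fast integral system. -/
def RSslow (S : E₁ →L[ℝ] E₁) (g1 : E₁ → E₂ → E₁) (σ ε : ℝ) (ξ : ℝ → E₂) (x0 : E₁)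
    (x : ℝ → E₁) (y : ℝ → E₂) (t : ℝ) : E₁ :=
  NormedSpace.exp ((ε * t) • S) x0 +
    ε • ∫ s in (0:ℝ)..t, NormedSpace.exp ((ε * (t - s)) • S) (g1 (x s) (y s + σ • ξ s))

/-- Fast component of the time-rescaled slow–fast integral system. -/
def RSfast (F : E₂ →L[ℝ] E₂) (g2 : E₁ → E₂ → E₂) (σ : ℝ) (ξ : ℝ → E₂)
    (x : ℝ → E₁) (y : ℝ → E₂) (t : ℝ) : E₂ :=
  ∫ s in Set.Iic t, NormedSpace.exp ((t - s) • F) (g2 (x s) (y s + σ • ξ s))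

/-- Right-hand side of the critical (`ε = 0`) integral equation. -/
def Crit (F : E₂ →L[ℝ] E₂) (g2 : E₁ → E₂ → E₂) (σ : ℝ) (ξ : ℝ → E₂) (x0 : E₁)
    (y : ℝ → E₂) (t : ℝ) : E₂ :=
  ∫ s in Set.Iic t, NormedSpace.exp ((t - s) • F) (g2 x0 (y s + σ • ξ s))

/-!
The slow variable barely moves: by variation of constants and the backward bound on
`exp (t • S)`, `‖x̃(s) - x₀‖ ≤ C₁ (1 - e^{ε γs s})` for `s ≤ 0`. Subtracting the two fast
integral equations, the Lipschitz bound on `g₂` and the forward decay of `exp (t • F)` give,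
with `D` the weighted distance between `ỹ` and `y⁰`,
`e^{γ t} ‖ỹ(t) - y⁰(t)‖ ≤ K C₁ q(t, ε) + K D / (-(γ + γf))`.
Taking the supremum over `t ≤ 0`, the last term is absorbed because `K < -(γ + γf)`.
-/

open Set

theorem integral_exp_mul_of_ne_zero {c : ℝ} (hc : c ≠ 0) (a b : ℝ) :
    ∫ x in a..b, Real.exp (c * x) = (Real.exp (c * b) - Real.exp (c * a)) / c := by
  rw [intervalIntegral.integral_comp_mul_left (fun x => Real.exp x) hc, integral_exp, smul_eq_mul]
  ring

theorem exp_mul_sub_mul_exp (a b t s : ℝ) :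
    Real.exp (b * (t - s)) * Real.exp (a * s) = Real.exp (b * t) * Real.exp ((a - b) * s) := by
  rw [← Real.exp_add, ← Real.exp_add]; ring_nf

theorem integrableOn_exp_mul_sub_mul_exp_Iic {a b : ℝ} (hab : b < a) (t : ℝ) :
    IntegrableOn (fun s => Real.exp (b * (t - s)) * Real.exp (a * s)) (Iic t) := by
  simp_rw [exp_mul_sub_mul_exp]
  exact (integrableOn_exp_mul_Iic (sub_pos.2 hab) t).const_mul _

theorem integral_exp_mul_sub_mul_exp_Iic {a b : ℝ} (hab : b < a) (t : ℝ) :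
    ∫ s in Iic t, Real.exp (b * (t - s)) * Real.exp (a * s) = Real.exp (a * t) / (a - b) := by
  simp_rw [exp_mul_sub_mul_exp]
  rw [integral_const_mul, integral_exp_mul_Iic (sub_pos.2 hab), mul_div_assoc', ← Real.exp_add]
  ring_nf

theorem le_mul_exp_neg_of_exp_mul_le {γ t v N : ℝ} (h : Real.exp (γ * t) * v ≤ N) :
    v ≤ N * Real.exp (-γ * t) := by
  rwa [neg_mul, Real.exp_neg, ← div_eq_mul_inv, le_div_iff₀' (Real.exp_pos _)]

section WeightedNorm

variable {E : Type*} [NormedAddCommGroup E] {γ : ℝ} {φ ψ : ℝ → E}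

theorem MemCneg.exists_norm_le (h : MemCneg (-γ) φ) :
    ∃ N, ∀ t ≤ (0:ℝ), ‖φ t‖ ≤ N * Real.exp (-γ * t) := by
  obtain ⟨N, hN⟩ := h.2
  refine ⟨N, fun t ht => le_mul_exp_neg_of_exp_mul_le ?_⟩
  simpa using hN ⟨⟨t, ht⟩, rfl⟩

theorem MemCneg.norm_le_negNorm_mul (h : MemCneg (-γ) φ) {t : ℝ} (ht : t ≤ 0) :
    ‖φ t‖ ≤ negNorm (-γ) φ * Real.exp (-γ * t) :=
  le_mul_exp_neg_of_exp_mul_le <| by simpa [negNorm] using le_ciSup h.2 ⟨t, ht⟩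

theorem negNorm_le {c : ℝ} (h : ∀ t ≤ (0:ℝ), Real.exp (γ * t) * ‖φ t‖ ≤ c) :
    negNorm (-γ) φ ≤ c := by
  have : Nonempty (Iic (0:ℝ)) := nonempty_Iic.to_subtype
  exact ciSup_le fun t => by simpa using h t.1 t.2

theorem MemCneg.sub (hφ : MemCneg (-γ) φ) (hψ : MemCneg (-γ) ψ) :
    MemCneg (-γ) fun t => φ t - ψ t := by
  obtain ⟨Nφ, hNφ⟩ := hφ.2
  obtain ⟨Nψ, hNψ⟩ := hψ.2
  refine ⟨hφ.1.sub hψ.1, Nφ + Nψ, ?_⟩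
  rintro _ ⟨t, rfl⟩
  have hφt := hNφ ⟨t, rfl⟩
  have hψt := hNψ ⟨t, rfl⟩
  simp only at hφt hψt ⊢
  nlinarith [norm_sub_le (φ t) (ψ t), Real.exp_pos (-(-γ) * t.1)]

theorem memCneg_const (hγ : 0 ≤ γ) (x : E) : MemCneg (-γ) fun _ => x := by
  refine ⟨continuousOn_const, ‖x‖, ?_⟩
  rintro _ ⟨t, rfl⟩
  have : Real.exp (-(-γ) * t.1) ≤ 1 :=
    Real.exp_le_one_iff.2 (by nlinarith [t.2.out])
  simpa using mul_le_of_le_one_left (norm_nonneg x) this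

theorem MemCneg.aestronglyMeasurable (h : MemCneg (-γ) φ) {t : ℝ} (ht : t ≤ 0) :
    AEStronglyMeasurable φ (volume.restrict (Iic t)) :=
  (h.1.mono (Iic_subset_Iic.2 ht)).aestronglyMeasurable measurableSet_Iic

end WeightedNorm

section LipschitzInTwoArguments

variable {X Y E : Type*} [NormedAddCommGroup X] [NormedAddCommGroup Y] [NormedAddCommGroup E]
  {g : X → Y → E} {K : ℝ}

theorem continuous_uncurry_of_norm_sub_le
    (hg : ∀ x₁ y₁ x₂ y₂, ‖g x₁ y₁ - g x₂ y₂‖ ≤ K * (‖x₁ - x₂‖ + ‖y₁ - y₂‖)) :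
    Continuous (Function.uncurry g) := by
  refine (LipschitzWith.of_dist_le_mul (K := (2 * K).toNNReal) fun p q => ?_).continuous
  rw [dist_eq_norm, dist_eq_norm]
  have h₁ : ‖p.1 - q.1‖ ≤ ‖p - q‖ := norm_fst_le (p - q)
  have h₂ : ‖p.2 - q.2‖ ≤ ‖p - q‖ := norm_snd_le (p - q)
  refine (hg p.1 p.2 q.1 q.2).trans ?_
  rcases le_total 0 K with hK | hK
  · rw [Real.coe_toNNReal _ (by positivity)]; nlinarith
  · nlinarith [norm_nonneg (p.1 - q.1), norm_nonneg (p.2 - q.2), NNReal.coe_nonneg (2 * K).toNNReal,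
      norm_nonneg (p - q)]

theorem norm_le_of_norm_sub_le
    (hg : ∀ x₁ y₁ x₂ y₂, ‖g x₁ y₁ - g x₂ y₂‖ ≤ K * (‖x₁ - x₂‖ + ‖y₁ - y₂‖)) (hg0 : g 0 0 = 0)
    (x : X) (y : Y) : ‖g x y‖ ≤ K * (‖x‖ + ‖y‖) := by
  simpa [hg0] using hg x y 0 0

end LipschitzInTwoArguments

theorem continuous_exp_smul {𝔸 : Type*} [NormedRing 𝔸] [NormedAlgebra ℝ 𝔸] [CompleteSpace 𝔸]
    (A : 𝔸) : Continuous fun u : ℝ => NormedSpace.exp (u • A) :=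
  continuous_iff_continuousAt.2 fun u => (hasDerivAt_exp_smul_const (𝕂 := ℝ) A u).continuousAt

section Slow

variable {S : E₁ →L[ℝ] E₁} {γs : ℝ}

theorem norm_exp_smul_apply_sub_le [CompleteSpace E₁] (hγs : 0 < γs)
    (hS : ∀ t ≤ (0:ℝ), ∀ x : E₁, ‖NormedSpace.exp (t • S) x‖ ≤ Real.exp (γs * t) * ‖x‖)
    {τ : ℝ} (hτ : τ ≤ 0) (x : E₁) :
    ‖NormedSpace.exp (τ • S) x - x‖ ≤ ‖S x‖ / γs * (1 - Real.exp (γs * τ)) := by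
  have hderiv (u : ℝ) : HasDerivAt (fun v : ℝ => NormedSpace.exp (v • S) x)
      (NormedSpace.exp (u • S) (S x)) u := by
    simpa using (hasDerivAt_exp_smul_const (𝕂 := ℝ) S u).clm_apply (hasDerivAt_const u x)
  have hftc : ∫ u in τ..0, NormedSpace.exp (u • S) (S x) = x - NormedSpace.exp (τ • S) x := by
    have hint : IntervalIntegrable (fun u => NormedSpace.exp (u • S) (S x)) volume τ 0 :=
      ((continuous_exp_smul S).clm_apply continuous_const).intervalIntegrable τ 0
    simpa using intervalIntegral.integral_eq_sub_of_hasDerivAt (fun u _ => hderiv u) hint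
  calc ‖NormedSpace.exp (τ • S) x - x‖ = ‖∫ u in τ..0, NormedSpace.exp (u • S) (S x)‖ := by
        rw [hftc, norm_sub_rev]
    _ ≤ ∫ u in τ..0, ‖S x‖ * Real.exp (γs * u) :=
        intervalIntegral.norm_integral_le_of_norm_le hτ
          (ae_of_all _ fun u hu => (hS u hu.2 (S x)).trans_eq (mul_comm _ _))
          (by apply Continuous.intervalIntegrable; fun_prop)
    _ = ‖S x‖ / γs * (1 - Real.exp (γs * τ)) := by
        rw [intervalIntegral.integral_const_mul, integral_exp_mul_of_ne_zero hγs.ne', mul_zero,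
          Real.exp_zero]
        ring

theorem norm_smul_integral_exp_smul_apply_le (hγs : 0 < γs)
    (hS : ∀ t ≤ (0:ℝ), ∀ x : E₁, ‖NormedSpace.exp (t • S) x‖ ≤ Real.exp (γs * t) * ‖x‖)
    {ε C : ℝ} (hε : 0 < ε) {f : ℝ → E₁} (hf : ∀ u, ‖f u‖ ≤ C) {s : ℝ} (hs : s ≤ 0) :
    ‖ε • ∫ u in (0:ℝ)..s, NormedSpace.exp ((ε * (s - u)) • S) (f u)‖ ≤
      C / γs * (1 - Real.exp (ε * γs * s)) := by
  have hεγs : ε * γs ≠ 0 := (mul_pos hε hγs).ne'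
  have hbound : ‖∫ u in s..0, NormedSpace.exp ((ε * (s - u)) • S) (f u)‖ ≤
      ∫ u in s..0, C * Real.exp (ε * γs * (s - u)) := by
    refine intervalIntegral.norm_integral_le_of_norm_le hs (ae_of_all _ fun u hu => ?_)
      (by apply Continuous.intervalIntegrable; fun_prop)
    calc ‖NormedSpace.exp ((ε * (s - u)) • S) (f u)‖ ≤ Real.exp (γs * (ε * (s - u))) * ‖f u‖ :=
          hS _ (mul_nonpos_of_nonneg_of_nonpos hε.le (by linarith [hu.1])) _
      _ ≤ Real.exp (γs * (ε * (s - u))) * C := by gcongr; exact hf u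
      _ = C * Real.exp (ε * γs * (s - u)) := by ring_nf
  rw [intervalIntegral.integral_symm, norm_smul, norm_neg, Real.norm_of_nonneg hε.le]
  calc ε * ‖∫ u in s..0, NormedSpace.exp ((ε * (s - u)) • S) (f u)‖
      ≤ ε * ∫ u in s..0, C * Real.exp (ε * γs * (s - u)) := by gcongr
    _ = C / γs * (1 - Real.exp (ε * γs * s)) := by
        rw [intervalIntegral.integral_const_mul,
          intervalIntegral.integral_comp_sub_left (fun v => Real.exp (ε * γs * v)), sub_zero,
          sub_self, integral_exp_mul_of_ne_zero hεγs, mul_zero, Real.exp_zero]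
        field_simp

theorem norm_RSslow_sub_le [CompleteSpace E₁] (hγs : 0 < γs)
    (hS : ∀ t ≤ (0:ℝ), ∀ x : E₁, ‖NormedSpace.exp (t • S) x‖ ≤ Real.exp (γs * t) * ‖x‖)
    {g : E₁ → E₂ → E₁} {C : ℝ} (hg : ∀ x y, ‖g x y‖ ≤ C) {σ ε : ℝ} (hε : 0 < ε) (ξ : ℝ → E₂)
    (x0 : E₁) (x : ℝ → E₁) (y : ℝ → E₂) {s : ℝ} (hs : s ≤ 0) :
    ‖RSslow S g σ ε ξ x0 x y s - x0‖ ≤ (‖S x0‖ + C) / γs * (1 - Real.exp (ε * γs * s)) := by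
  have hlinear := norm_exp_smul_apply_sub_le hγs hS (mul_nonpos_of_nonneg_of_nonpos hε.le hs) x0
  have hforcing := norm_smul_integral_exp_smul_apply_le hγs hS hε
    (f := fun u => g (x u) (y u + σ • ξ u)) (fun u => hg _ _) hs
  rw [show γs * (ε * s) = ε * γs * s by ring] at hlinear
  calc ‖RSslow S g σ ε ξ x0 x y s - x0‖
      ≤ ‖NormedSpace.exp ((ε * s) • S) x0 - x0‖ +
          ‖ε • ∫ u in (0:ℝ)..s, NormedSpace.exp ((ε * (s - u)) • S) (g (x u) (y u + σ • ξ u))‖ := by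
        rw [RSslow, add_sub_right_comm]; exact norm_add_le _ _
    _ ≤ (‖S x0‖ + C) / γs * (1 - Real.exp (ε * γs * s)) :=
        (add_le_add hlinear hforcing).trans_eq (by ring)

end Slow

section Fast

variable {F : E₂ →L[ℝ] E₂} {γf : ℝ}

theorem integrableOn_exp_smul_apply_Iic [CompleteSpace E₂]
    (hF : ∀ t ≥ (0:ℝ), ∀ y : E₂, ‖NormedSpace.exp (t • F) y‖ ≤ Real.exp (γf * t) * ‖y‖)
    {γ t B : ℝ} (hγ : γ + γf < 0) {w : ℝ → E₂}
    (hw : AEStronglyMeasurable w (volume.restrict (Iic t)))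
    (hB : ∀ s ≤ t, ‖w s‖ ≤ B * Real.exp (-γ * s)) :
    IntegrableOn (fun s => NormedSpace.exp ((t - s) • F) (w s)) (Iic t) := by
  have hmeas : AEStronglyMeasurable (fun s => NormedSpace.exp ((t - s) • F) (w s))
      (volume.restrict (Iic t)) :=
    isBoundedBilinearMap_apply.continuous.comp_aestronglyMeasurable₂
      ((continuous_exp_smul F).comp (continuous_const.sub continuous_id)).aestronglyMeasurable hw
  refine Integrable.mono'
    ((integrableOn_exp_mul_sub_mul_exp_Iic (a := -γ) (b := γf) (by linarith) t).const_mul B)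
    hmeas ?_
  filter_upwards [ae_restrict_mem measurableSet_Iic] with s hs
  calc ‖NormedSpace.exp ((t - s) • F) (w s)‖ ≤ Real.exp (γf * (t - s)) * ‖w s‖ :=
        hF _ (sub_nonneg.2 hs) _
    _ ≤ Real.exp (γf * (t - s)) * (B * Real.exp (-γ * s)) := by gcongr; exact hB s hs
    _ = B * (Real.exp (γf * (t - s)) * Real.exp (-γ * s)) := by ring

theorem norm_integral_exp_smul_apply_le
    (hF : ∀ t ≥ (0:ℝ), ∀ y : E₂, ‖NormedSpace.exp (t • F) y‖ ≤ Real.exp (γf * t) * ‖y‖)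
    {t : ℝ} {w : ℝ → E₂} {b : ℝ → ℝ}
    (hb : IntegrableOn (fun s => Real.exp (γf * (t - s)) * b s) (Iic t))
    (hw : ∀ s ≤ t, ‖w s‖ ≤ b s) :
    ‖∫ s in Iic t, NormedSpace.exp ((t - s) • F) (w s)‖ ≤
      ∫ s in Iic t, Real.exp (γf * (t - s)) * b s :=
  norm_integral_le_of_norm_le hb <| by
    filter_upwards [ae_restrict_mem measurableSet_Iic] with s hs
    exact (hF _ (sub_nonneg.2 hs) _).trans (by gcongr; exact hw s hs)

theorem integrableOn_fast_integrand {X : Type*} [NormedAddCommGroup X] [CompleteSpace E₂]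
    [MeasurableSpace E₂] [OpensMeasurableSpace E₂] [SecondCountableTopology E₂]
    (hF : ∀ t ≥ (0:ℝ), ∀ y : E₂, ‖NormedSpace.exp (t • F) y‖ ≤ Real.exp (γf * t) * ‖y‖)
    {γ K σ : ℝ} (hγ : γ + γf < 0) (hK : 0 ≤ K) {g : X → E₂ → E₂}
    (hg : ∀ x₁ y₁ x₂ y₂, ‖g x₁ y₁ - g x₂ y₂‖ ≤ K * (‖x₁ - x₂‖ + ‖y₁ - y₂‖)) (hg0 : g 0 0 = 0)
    {ξ : ℝ → E₂} (hξm : Measurable ξ) (hξ : ∃ M, ∀ t ≤ (0:ℝ), Real.exp (γ * t) * ‖ξ t‖ ≤ M)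
    {u : ℝ → X} {v : ℝ → E₂} (hu : MemCneg (-γ) u) (hv : MemCneg (-γ) v) {t : ℝ} (ht : t ≤ 0) :
    IntegrableOn (fun s => NormedSpace.exp ((t - s) • F) (g (u s) (v s + σ • ξ s))) (Iic t) := by
  obtain ⟨Nu, hNu⟩ := hu.exists_norm_le
  obtain ⟨Nv, hNv⟩ := hv.exists_norm_le
  obtain ⟨M, hM⟩ := hξ
  refine integrableOn_exp_smul_apply_Iic hF hγ (B := K * (Nu + Nv + |σ| * M)) ?_ fun s hs => ?_
  · exact (continuous_uncurry_of_norm_sub_le hg).comp_aestronglyMeasurable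
      ((hu.aestronglyMeasurable ht).prodMk
        ((hv.aestronglyMeasurable ht).add (hξm.aestronglyMeasurable.const_smul σ)))
  have hs0 : s ≤ 0 := hs.trans ht
  have hξs : |σ| * ‖ξ s‖ ≤ |σ| * (M * Real.exp (-γ * s)) := by
    gcongr; exact le_mul_exp_neg_of_exp_mul_le (hM s hs0)
  calc ‖g (u s) (v s + σ • ξ s)‖ ≤ K * (‖u s‖ + (‖v s‖ + |σ| * ‖ξ s‖)) := by
        refine (norm_le_of_norm_sub_le hg hg0 _ _).trans ?_
        gcongr
        exact (norm_add_le _ _).trans_eq (by rw [norm_smul, Real.norm_eq_abs])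
    _ ≤ K * (Nu * Real.exp (-γ * s) +
          (Nv * Real.exp (-γ * s) + |σ| * (M * Real.exp (-γ * s)))) := by
        gcongr
        · exact hNu s hs0
        · exact hNv s hs0
    _ = K * (Nu + Nv + |σ| * M) * Real.exp (-γ * s) := by ring

theorem exp_mul_norm_RSfast_sub_Crit_le
    (hF : ∀ t ≥ (0:ℝ), ∀ y : E₂, ‖NormedSpace.exp (t • F) y‖ ≤ Real.exp (γf * t) * ‖y‖)
    {γ K a σ C₁ D t : ℝ} (hγf : γf < 0) (hγ : γ + γf < 0) (ha : γf < a) (hK : 0 ≤ K)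
    {X : Type*} [NormedAddCommGroup X] {g : X → E₂ → E₂}
    (hg : ∀ x₁ y₁ x₂ y₂, ‖g x₁ y₁ - g x₂ y₂‖ ≤ K * (‖x₁ - x₂‖ + ‖y₁ - y₂‖))
    {ξ : ℝ → E₂} {x0 : X} {x : ℝ → X} {y y0 : ℝ → E₂}
    (hint : IntegrableOn (fun s => NormedSpace.exp ((t - s) • F) (g (x s) (y s + σ • ξ s))) (Iic t))
    (hint0 : IntegrableOn (fun s => NormedSpace.exp ((t - s) • F) (g x0 (y0 s + σ • ξ s))) (Iic t))
    (hx : ∀ s ≤ t, ‖x s - x0‖ ≤ C₁ * (1 - Real.exp (a * s)))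
    (hy : ∀ s ≤ t, ‖y s - y0 s‖ ≤ D * Real.exp (-γ * s)) :
    Real.exp (γ * t) * ‖RSfast F g σ ξ x y t - Crit F g σ ξ x0 y0 t‖ ≤
      K * C₁ * (Real.exp ((γ + a) * t) / (γf - a) - Real.exp (γ * t) / γf) +
        K * D / (-(γ + γf)) := by
  set kernel : ℝ → ℝ → ℝ := fun c s => Real.exp (γf * (t - s)) * Real.exp (c * s)
  set b : ℝ → ℝ := fun s =>
    K * C₁ * Real.exp (0 * s) - K * C₁ * Real.exp (a * s) + K * D * Real.exp (-γ * s)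
  have hkernel_int {c : ℝ} (hc : γf < c) : IntegrableOn (kernel c) (Iic t) :=
    integrableOn_exp_mul_sub_mul_exp_Iic hc t
  have hsplit : (fun s => Real.exp (γf * (t - s)) * b s) =
      fun s => K * C₁ * kernel 0 s - K * C₁ * kernel a s + K * D * kernel (-γ) s := by
    ext s; simp only [b, kernel]; ring
  have h₀ := (hkernel_int hγf).const_mul (K * C₁)
  have hₐ := (hkernel_int ha).const_mul (K * C₁)
  have hᵧ := (hkernel_int (c := -γ) (by linarith)).const_mul (K * D)
  have hb_int : IntegrableOn (fun s => Real.exp (γf * (t - s)) * b s) (Iic t) := by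
    rw [hsplit]; exact (h₀.sub hₐ).add hᵧ
  have hb_val : ∫ s in Iic t, Real.exp (γf * (t - s)) * b s =
      K * C₁ * (Real.exp (0 * t) / (0 - γf)) - K * C₁ * (Real.exp (a * t) / (a - γf)) +
        K * D * (Real.exp (-γ * t) / (-γ - γf)) := by
    rw [hsplit, integral_add (by exact h₀.sub hₐ) hᵧ, integral_sub h₀ hₐ, integral_const_mul,
      integral_const_mul, integral_const_mul, integral_exp_mul_sub_mul_exp_Iic hγf,
      integral_exp_mul_sub_mul_exp_Iic ha, integral_exp_mul_sub_mul_exp_Iic (by linarith)]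
  have hdiff : RSfast F g σ ξ x y t - Crit F g σ ξ x0 y0 t =
      ∫ s in Iic t, NormedSpace.exp ((t - s) • F)
        (g (x s) (y s + σ • ξ s) - g x0 (y0 s + σ • ξ s)) := by
    simp only [RSfast, Crit, map_sub]
    exact (integral_sub hint hint0).symm
  have hpt (s : ℝ) (hs : s ≤ t) :
      ‖g (x s) (y s + σ • ξ s) - g x0 (y0 s + σ • ξ s)‖ ≤ b s := by
    refine (hg _ _ _ _).trans ?_
    rw [add_sub_add_right_eq_sub]
    calc K * (‖x s - x0‖ + ‖y s - y0 s‖)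
        ≤ K * (C₁ * (1 - Real.exp (a * s)) + D * Real.exp (-γ * s)) := by
          gcongr
          exacts [hx s hs, hy s hs]
      _ = b s := by simp only [b, zero_mul, Real.exp_zero]; ring
  have hne : γ + γf ≠ 0 := hγ.ne
  calc Real.exp (γ * t) * ‖RSfast F g σ ξ x y t - Crit F g σ ξ x0 y0 t‖
      ≤ Real.exp (γ * t) * ∫ s in Iic t, Real.exp (γf * (t - s)) * b s := by
        rw [hdiff]; gcongr; exact norm_integral_exp_smul_apply_le hF hb_int hpt
    _ = _ := by
        have : γf - a ≠ 0 := by linarith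
        have : a - γf ≠ 0 := by linarith
        rw [hb_val, add_mul, Real.exp_add, zero_mul, Real.exp_zero, zero_sub, neg_mul, Real.exp_neg,
          show -γ - γf = -(γ + γf) by ring]
        field_simp
        ring

end Fast

theorem bddAbove_range_exp_div_sub_exp_div {γ γf a : ℝ} (hγ : 0 ≤ γ) (hγf : γf < 0)
    (ha : γf < a) :
    BddAbove (Set.range fun t : Iic (0:ℝ) =>
      Real.exp ((γ + a) * t.1) / (γf - a) - Real.exp (γ * t.1) / γf) := by
  refine ⟨-1 / γf, ?_⟩
  rintro _ ⟨⟨t, ht⟩, rfl⟩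
  have h₁ : Real.exp ((γ + a) * t) / (γf - a) ≤ 0 :=
    div_nonpos_of_nonneg_of_nonpos (Real.exp_pos _).le (by linarith)
  have h₂ : Real.exp (γ * t) ≤ 1 := Real.exp_le_one_iff.2 (mul_nonpos_of_nonneg_of_nonpos hγ ht)
  have h₃ : -Real.exp (γ * t) / γf ≤ -1 / γf := div_le_div_of_nonpos_of_le hγf.le (by linarith)
  simp only [neg_div] at h₃ ⊢
  linarith

theorem rescaled_fast_component_estimate_general
    {E₁ E₂ : Type*}
    [NormedAddCommGroup E₁] [NormedSpace ℝ E₁] [FiniteDimensional ℝ E₁]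
    [NormedAddCommGroup E₂] [NormedSpace ℝ E₂] [FiniteDimensional ℝ E₂] [MeasurableSpace E₂] [BorelSpace E₂]
    (S : E₁ →L[ℝ] E₁) (F : E₂ →L[ℝ] E₂)
    (γs γf γ K σ : ℝ)
    (hγs : 0 < γs) (hγf : γf < 0) (hγ : 0 < γ) (hK : 0 < K)
    (hgap : K < -(γ + γf))
    (hS : ∀ t ≤ (0:ℝ), ∀ x : E₁, ‖NormedSpace.exp (t • S) x‖ ≤ Real.exp (γs * t) * ‖x‖)
    (hF : ∀ t ≥ (0:ℝ), ∀ y : E₂, ‖NormedSpace.exp (t • F) y‖ ≤ Real.exp (γf * t) * ‖y‖)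
    (g1 : E₁ → E₂ → E₁) (g2 : E₁ → E₂ → E₂)
    (hg2l : ∀ x₁ y₁ x₂ y₂, ‖g2 x₁ y₁ - g2 x₂ y₂‖ ≤ K * (‖x₁ - x₂‖ + ‖y₁ - y₂‖))
    (hg20 : g2 0 0 = 0)
    (ξ : ℝ → E₂) (hξm : Measurable ξ)
    (hξ : ∃ M, ∀ t ≤ (0:ℝ), Real.exp (γ * t) * ‖ξ t‖ ≤ M)
    (ε : ℝ) (hε : 0 < ε)
    (C : ℝ) (hg1bd : ∀ x y, ‖g1 x y‖ ≤ C)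
    (x0 : E₁) (xt : ℝ → E₁) (yt : ℝ → E₂)
    (hmem : MemCneg (-γ) xt ∧ MemCneg (-γ) yt)
    (hsol : ∀ t ≤ (0:ℝ), xt t = RSslow S g1 σ ε ξ x0 xt yt t ∧
      yt t = RSfast F g2 σ ξ xt yt t)
    (y0fn : ℝ → E₂)
    (hmem0 : MemCneg (-γ) y0fn)
    (hsol0 : ∀ t ≤ (0:ℝ), y0fn t = Crit F g2 σ ξ x0 y0fn t) :
    negNorm (-γ) (fun t => yt t - y0fn t) ≤
      K * ((‖S x0‖ + C) / γs) / (1 + K / (γ + γf)) *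
        ⨆ t : Set.Iic (0:ℝ),
          (Real.exp ((γ + ε * γs) * t.1) / (γf - ε * γs) - Real.exp (γ * t.1) / γf) := by
  obtain ⟨hx, hy⟩ := hmem
  have hγγf : γ + γf < 0 := by linarith
  have hγfa : γf < ε * γs := hγf.trans (mul_pos hε hγs)
  set C₁ := (‖S x0‖ + C) / γs
  set Q := ⨆ t : Set.Iic (0:ℝ),
    (Real.exp ((γ + ε * γs) * t.1) / (γf - ε * γs) - Real.exp (γ * t.1) / γf)
  set D := negNorm (-γ) (fun t => yt t - y0fn t)
  have hC₁ : 0 ≤ C₁ :=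
    div_nonneg (add_nonneg (norm_nonneg _) ((norm_nonneg _).trans (hg1bd 0 0))) hγs.le
  have hslow (s : ℝ) (hs : s ≤ 0) : ‖xt s - x0‖ ≤ C₁ * (1 - Real.exp (ε * γs * s)) := by
    rw [(hsol s hs).1]; exact norm_RSslow_sub_le hγs hS hg1bd hε ξ x0 xt yt hs
  have hpoint (t : ℝ) (ht : t ≤ 0) :
      Real.exp (γ * t) * ‖yt t - y0fn t‖ ≤ K * C₁ * Q + K * D / (-(γ + γf)) := by
    have hint := integrableOn_fast_integrand (σ := σ) hF hγγf hK.le hg2l hg20 hξm hξ hx hy ht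
    have hint0 := integrableOn_fast_integrand (σ := σ) hF hγγf hK.le hg2l hg20 hξm hξ
      (memCneg_const hγ.le x0) hmem0 ht
    have hq : _ ≤ Q := le_ciSup (bddAbove_range_exp_div_sub_exp_div hγ.le hγf hγfa) ⟨t, ht⟩
    rw [(hsol t ht).2, hsol0 t ht]
    refine (exp_mul_norm_RSfast_sub_Crit_le hF hγf hγγf hγfa hK.le hg2l hint hint0
      (fun s hs => hslow s (hs.trans ht))
      (fun s hs => (hy.sub hmem0).norm_le_negNorm_mul (hs.trans ht))).trans ?_
    gcongr
  have hD : D ≤ K * C₁ * Q + K * D / (-(γ + γf)) := negNorm_le hpoint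
  have hden : 0 < 1 + K / (γ + γf) := by
    have : -1 < K / (γ + γf) := by rw [lt_div_iff_of_neg hγγf]; linarith
    linarith
  have habsorb : D * (1 + K / (γ + γf)) = D - K * D / (-(γ + γf)) := by
    field_simp [hγγf.ne]; ring
  rw [div_mul_eq_mul_div, le_div_iff₀ hden]
  linarith

/-- Comparison of the rescaled fast component with the critical-manifold
fast component: `sup_{t≤0} e^{γt}‖ỹ^ε(t) - y⁰(t)‖ ≤ (K C₁/(1+K/(γ+γ_f))) sup_{t≤0} q(t,ε)`. -/
theorem rescaled_fast_component_estimate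
    {E₁ E₂ : Type*}
    [NormedAddCommGroup E₁] [NormedSpace ℝ E₁] [FiniteDimensional ℝ E₁] [MeasurableSpace E₁] [BorelSpace E₁]
    [NormedAddCommGroup E₂] [NormedSpace ℝ E₂] [FiniteDimensional ℝ E₂] [MeasurableSpace E₂] [BorelSpace E₂]
    (S : E₁ →L[ℝ] E₁) (F : E₂ →L[ℝ] E₂)
    (γs γf γ K σ : ℝ)
    (hγs : 0 < γs) (hγf : γf < 0) (hγ : 0 < γ) (hK : 0 < K)
    (hgap : K < -(γ + γf)) (hσ : 0 ≤ σ)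
    (hS : ∀ t ≤ (0:ℝ), ∀ x : E₁, ‖NormedSpace.exp (t • S) x‖ ≤ Real.exp (γs * t) * ‖x‖)
    (hF : ∀ t ≥ (0:ℝ), ∀ y : E₂, ‖NormedSpace.exp (t • F) y‖ ≤ Real.exp (γf * t) * ‖y‖)
    (g1 : E₁ → E₂ → E₁) (g2 : E₁ → E₂ → E₂)
    (hg1l : ∀ x₁ y₁ x₂ y₂, ‖g1 x₁ y₁ - g1 x₂ y₂‖ ≤ K * (‖x₁ - x₂‖ + ‖y₁ - y₂‖))
    (hg2l : ∀ x₁ y₁ x₂ y₂, ‖g2 x₁ y₁ - g2 x₂ y₂‖ ≤ K * (‖x₁ - x₂‖ + ‖y₁ - y₂‖))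
    (hg10 : g1 0 0 = 0) (hg20 : g2 0 0 = 0)
    (ξ : ℝ → E₂) (hξm : Measurable ξ)
    (hξb : ∀ r : ℝ, ∃ M, ∀ t : ℝ, |t| ≤ r → ‖ξ t‖ ≤ M)
    (hξ : ∃ M, ∀ t ≤ (0:ℝ), Real.exp (γ * t) * ‖ξ t‖ ≤ M)
    (ε : ℝ) (hε : 0 < ε) (hρ : (ε * K / (γ + ε * γs) - K / (γ + γf)) < 1)
    (C : ℝ) (hC : 0 < C) (hg1bd : ∀ x y, ‖g1 x y‖ ≤ C)
    (x0 : E₁) (xt : ℝ → E₁) (yt : ℝ → E₂)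
    (hmem : MemCneg (-γ) xt ∧ MemCneg (-γ) yt)
    (hsol : ∀ t ≤ (0:ℝ), xt t = RSslow S g1 σ ε ξ x0 xt yt t ∧
      yt t = RSfast F g2 σ ξ xt yt t)
    (y0fn : ℝ → E₂)
    (hmem0 : MemCneg (-γ) y0fn)
    (hsol0 : ∀ t ≤ (0:ℝ), y0fn t = Crit F g2 σ ξ x0 y0fn t) :
    negNorm (-γ) (fun t => yt t - y0fn t) ≤
      K * ((‖S x0‖ + C) / γs) / (1 + K / (γ + γf)) *
        ⨆ t : Set.Iic (0:ℝ),
          (Real.exp ((γ + ε * γs) * t.1) / (γf - ε * γs) - Real.exp (γ * t.1) / γf) :=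
  rescaled_fast_component_estimate_general S F γs γf γ K σ hγs hγf hγ hK hgap hS hF g1 g2 hg2l hg20
    ξ hξm hξ ε hε C hg1bd x0 xt yt hmem hsol y0fn hmem0 hsol0
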